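/- Shattering lower bound for Bernoulli bandit instances: let d points x_1,…,x_d be shattered by an M-action policy class Π via functions f_{-1}, f_1, and for σ ∈ {±1}^d let P_σ be the instance where X is uniform on {x_1,…,x_d} and Y(f_{σ_j}(x_j)) | X = x_j ~ ȳ·Bernoulli((1+Δ)/2), Y(f_{-σ_j}(x_j)) | X = x_j ~ ȳ·Bernoulli((1-Δ)/2). Then for the KL-robust value V_δ with radius δ and any policy π̂, the regret under P_σ satisfies V_δ(π*) - V_δ(π̂) ≥ (Δ/(2d))·Σ_{j=1}^d 1{π̂(x_j) ≠ f_{σ_j}(x_j)}, provided δ ≤ 0.2 and Δ ∈ (0, 0.1), where g_δ'(ξ) ≥ 1/2 is used for ξ ∈ ((1-Δ)/2, (1+Δ)/2). -/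

import Mathlib

/-!
The robust value of a `ȳ·Bernoulli(q)` arm is `ȳ·g_δ(q)`, so each misassigned point costs at
least `ȳ·(g_δ(b) - g_δ(q))` with `b = (1+Δ)/2` and `q ∈ {(1-Δ)/2, 1/4}`. Joint convexity of the
binary KL divergence makes `g_δ` convex, and `g_δ` vanishes at `q₀ = 1 - e^{-δ}`, where
`D(0‖q₀) = δ`. So on `[q₀, b]` the function `g_δ` lies below its chord through `(q₀, 0)` and
`(b, g_δ(b))`, whose slope is at least `1/2`: the entropy bound `H(p) ≤ e⁻² + 2p` gives
`D(p‖b) ≥ (10/9)(b - 2p)`, hence `2 g_δ(b) ≥ b - 9δ/10 ≥ b - q₀` when `δ ≤ 1/5`.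
-/

open Finset

/-- Binary KL divergence `D(p‖q) = p·log(p/q) + (1-p)·log((1-p)/(1-q))`. -/
noncomputable def bernKL (p q : ℝ) : ℝ :=
  p * Real.log (p / q) + (1 - p) * Real.log ((1 - p) / (1 - q))

/-- Lower endpoint of the binary-KL ball of radius `δ` around `q`. -/
noncomputable def gKL (δ q : ℝ) : ℝ :=
  sInf {p : ℝ | p ∈ Set.Icc (0 : ℝ) 1 ∧ bernKL p q ≤ δ}

section

open Real

lemma bernKL_eq_neg_binEntropy_sub {q : ℝ} (hq₀ : q ≠ 0) (hq₁ : q ≠ 1) (p : ℝ) :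
    bernKL p q = -binEntropy p - p * log q - (1 - p) * log (1 - q) := by
  have mul_log_div : ∀ {x y : ℝ}, y ≠ 0 → x * log (x / y) = x * log x - x * log y := by
    intro x y hy
    rcases eq_or_ne x 0 with rfl | hx
    · simp
    · rw [log_div hx hy]; ring
  rw [bernKL, mul_log_div hq₀, mul_log_div (sub_ne_zero.2 hq₁.symm), binEntropy, log_inv,
    log_inv]
  ring

lemma bernKL_self {q : ℝ} (hq₀ : q ≠ 0) (hq₁ : q ≠ 1) : bernKL q q = 0 := by
  rw [bernKL, div_self hq₀, div_self (sub_ne_zero.2 hq₁.symm), log_one]; ring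

lemma gKL_le {δ q p : ℝ} (hp : p ∈ Set.Icc 0 1) (h : bernKL p q ≤ δ) : gKL δ q ≤ p :=
  csInf_le ⟨0, fun _ h ↦ h.1.1⟩ ⟨hp, h⟩

lemma gKL_mem {δ q : ℝ} (hδ : 0 ≤ δ) (hq : q ∈ Set.Ioo 0 1) :
    gKL δ q ∈ Set.Icc 0 1 ∧ bernKL (gKL δ q) q ≤ δ := by
  have hq₀ := hq.1.ne'
  have hq₁ := hq.2.ne
  have hcont : Continuous fun p ↦ bernKL p q := by
    simp only [bernKL_eq_neg_binEntropy_sub hq₀ hq₁]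
    fun_prop
  refine IsClosed.csInf_mem (isClosed_Icc.inter (isClosed_le hcont continuous_const))
    ⟨q, ⟨hq.1.le, hq.2.le⟩, (bernKL_self hq₀ hq₁).le.trans hδ⟩ ⟨0, fun _ h ↦ h.1.1⟩

lemma negMulLog_le_exp_sub_mul {x : ℝ} (hx : 0 ≤ x) (s : ℝ) :
    negMulLog x ≤ exp s - (s + 1) * x := by
  have h := negMulLog_le_one_sub_self (mul_nonneg hx (exp_pos (-s)).le)
  rw [negMulLog_mul] at h
  simp only [negMulLog, log_exp] at h ⊢
  rw [exp_neg] at h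
  field_simp at h
  linarith

lemma binEntropy_le_exp_neg_two_add {p : ℝ} (hp₀ : 0 ≤ p) (hp₁ : p ≤ 1) :
    binEntropy p ≤ exp (-2) + 2 * p := by
  have h₁ := negMulLog_le_exp_sub_mul hp₀ (-2)
  have h₂ := negMulLog_le_one_sub_self (sub_nonneg.2 hp₁)
  rw [binEntropy_eq_negMulLog_add_negMulLog_one_sub]
  linarith

lemma convexOn_mul_log_div :
    ConvexOn ℝ (Set.Ici 0 ×ˢ Set.Ioi 0) fun z : ℝ × ℝ ↦ z.1 * log (z.1 / z.2) := by
  refine ⟨(convex_Ici 0).prod (convex_Ioi 0), ?_⟩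
  rintro ⟨p₁, q₁⟩ ⟨hp₁, hq₁⟩ ⟨p₂, q₂⟩ ⟨hp₂, hq₂⟩ a b ha hb hab
  simp only [Set.mem_Ici, Set.mem_Ioi] at hp₁ hq₁ hp₂ hq₂
  simp only [Prod.smul_mk, Prod.mk_add_mk, smul_eq_mul]
  have hQ : 0 < a * q₁ + b * q₂ := by
    nlinarith [mul_le_mul_of_nonneg_left (min_le_left q₁ q₂) ha,
      mul_le_mul_of_nonneg_left (min_le_right q₁ q₂) hb, lt_min hq₁ hq₂]
  set Q := a * q₁ + b * q₂
  -- `x log (x / y)` is the perspective of `t ↦ t log t`; apply its convexity with weights `a qᵢ / Q`.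
  have h := convexOn_mul_log.2 (Set.mem_Ici.2 (div_nonneg hp₁ hq₁.le))
    (Set.mem_Ici.2 (div_nonneg hp₂ hq₂.le)) (by positivity : 0 ≤ a * q₁ / Q)
    (by positivity : 0 ≤ b * q₂ / Q) (by field_simp; rfl)
  simp only [smul_eq_mul] at h
  have harg : a * q₁ / Q * (p₁ / q₁) + b * q₂ / Q * (p₂ / q₂) = (a * p₁ + b * p₂) / Q := by
    field_simp
  rw [harg] at h
  have := mul_le_mul_of_nonneg_left h hQ.le
  convert this using 1 <;> field_simp

lemma convexOn_bernKL :
    ConvexOn ℝ (Set.Icc 0 1 ×ˢ Set.Ioo 0 1) fun z : ℝ × ℝ ↦ bernKL z.1 z.2 := by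
  refine ⟨(convex_Icc 0 1).prod (convex_Ioo 0 1), ?_⟩
  rintro ⟨p₁, q₁⟩ ⟨⟨hp₁, hp₁'⟩, hq₁, hq₁'⟩ ⟨p₂, q₂⟩ ⟨⟨hp₂, hp₂'⟩, hq₂, hq₂'⟩ a b ha hb hab
  simp only [Prod.smul_mk, Prod.mk_add_mk, smul_eq_mul]
  have h := convexOn_mul_log_div.2 (x := (p₁, q₁)) (y := (p₂, q₂)) ⟨hp₁, hq₁⟩ ⟨hp₂, hq₂⟩ ha hb hab
  have h' := convexOn_mul_log_div.2 (x := (1 - p₁, 1 - q₁)) (y := (1 - p₂, 1 - q₂))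
    ⟨sub_nonneg.2 hp₁', sub_pos.2 hq₁'⟩ ⟨sub_nonneg.2 hp₂', sub_pos.2 hq₂'⟩ ha hb hab
  simp only [Prod.smul_mk, Prod.mk_add_mk, smul_eq_mul] at h h'
  have hp : a * (1 - p₁) + b * (1 - p₂) = 1 - (a * p₁ + b * p₂) := by linear_combination hab
  have hq : a * (1 - q₁) + b * (1 - q₂) = 1 - (a * q₁ + b * q₂) := by linear_combination hab
  rw [hp, hq] at h'
  simp only [bernKL]
  linarith

lemma convexOn_gKL {δ : ℝ} (hδ : 0 ≤ δ) : ConvexOn ℝ (Set.Ioo 0 1) (gKL δ) := by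
  refine ⟨convex_Ioo 0 1, fun q₁ hq₁ q₂ hq₂ a b ha hb hab ↦ ?_⟩
  obtain ⟨hg₁, hD₁⟩ := gKL_mem hδ hq₁
  obtain ⟨hg₂, hD₂⟩ := gKL_mem hδ hq₂
  have hmem := convexOn_bernKL.1 (x := (gKL δ q₁, q₁)) (y := (gKL δ q₂, q₂)) ⟨hg₁, hq₁⟩
    ⟨hg₂, hq₂⟩ ha hb hab
  have hconv := convexOn_bernKL.2 (x := (gKL δ q₁, q₁)) (y := (gKL δ q₂, q₂)) ⟨hg₁, hq₁⟩
    ⟨hg₂, hq₂⟩ ha hb hab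
  simp only [Prod.smul_mk, Prod.mk_add_mk, smul_eq_mul] at hmem hconv ⊢
  refine gKL_le hmem.1 (hconv.trans ?_)
  calc a * bernKL (gKL δ q₁) q₁ + b * bernKL (gKL δ q₂) q₂ ≤ a * δ + b * δ := by gcongr
    _ = δ := by rw [← add_mul, hab, one_mul]

lemma gKL_one_sub_exp_neg {δ : ℝ} (hδ : 0 < δ) : gKL δ (1 - exp (-δ)) = 0 := by
  have hq : 1 - exp (-δ) ∈ Set.Ioo 0 1 :=
    ⟨by simpa using exp_lt_one_iff.2 (neg_lt_zero.2 hδ), by simpa using exp_pos (-δ)⟩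
  refine le_antisymm (gKL_le ⟨le_rfl, zero_le_one⟩ ?_) (gKL_mem hδ.le hq).1.1
  simp [bernKL]

lemma nine_div_ten_mul_le_one_sub_exp_neg {δ : ℝ} (hδ₀ : 0 ≤ δ) (hδ : δ ≤ 1 / 5) :
    9 / 10 * δ ≤ 1 - exp (-δ) := by
  have h := quadratic_le_exp_of_nonneg hδ₀
  rw [exp_neg]
  have hpos : 0 < exp δ := exp_pos δ
  rw [le_sub_comm, inv_le_iff_one_le_mul₀ hpos]
  nlinarith

lemma sub_two_mul_le_bernKL {p b : ℝ} (hp₀ : 0 ≤ p) (hp₁ : p ≤ 1) (hb₀ : 1 / 2 ≤ b)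
    (hb₁ : b ≤ 11 / 20) : 10 / 9 * (b - 2 * p) ≤ bernKL p b := by
  have h1b : 0 < 1 - b := by linarith
  rw [bernKL_eq_neg_binEntropy_sub (by positivity) (by linarith)]
  have hH := binEntropy_le_exp_neg_two_add hp₀ hp₁
  have hlog₁ : log 2 + log (1 - b) ≤ 1 - 2 * b := by
    rw [← log_mul two_ne_zero h1b.ne']
    linarith [log_le_sub_one_of_pos (by linarith : 0 < 2 * (1 - b))]
  have hlog₂ : log b - log (1 - b) ≤ 2 / 9 := by
    rw [← log_div (by positivity) h1b.ne']
    have : b / (1 - b) ≤ 11 / 9 := by rw [div_le_iff₀ h1b]; linarith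
    linarith [log_le_sub_one_of_pos (by positivity : 0 < b / (1 - b))]
  -- The constant `10/9` is dictated by this step: `log 2 - e⁻² - 5/9 ≈ 0.0025`.
  have hexp : exp (-2) < log 2 - 5 / 9 := by
    have he : 7.389 < exp 2 := by
      have : exp 2 = exp 1 * exp 1 := by rw [← exp_add]; norm_num
      nlinarith [exp_one_gt_d9]
    have : exp (-2) < 7.389⁻¹ := by rw [exp_neg]; exact inv_strictAnti₀ (by norm_num) he
    linarith [log_two_gt_d9]
  nlinarith [mul_le_mul_of_nonneg_left hlog₂ hp₀]

lemma sub_div_two_le_gKL_sub {δ b q : ℝ} (hδ₀ : 0 < δ) (hδ : δ ≤ 1 / 5) (hb₀ : 1 / 2 ≤ b)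
    (hb₁ : b ≤ 11 / 20) (hq : 1 / 4 ≤ q) (hqb : q ≤ b) :
    (b - q) / 2 ≤ gKL δ b - gKL δ q := by
  set q₀ := 1 - exp (-δ)
  have hq₀ : 9 / 10 * δ ≤ q₀ := nine_div_ten_mul_le_one_sub_exp_neg hδ₀.le hδ
  have hq₀δ : q₀ ≤ δ := by linarith [add_one_le_exp (-δ)]
  have hb : b ∈ Set.Ioo 0 1 := ⟨by linarith, by linarith⟩
  obtain ⟨⟨hgb₀, hgb₁⟩, hD⟩ := gKL_mem hδ₀.le hb
  have hgb : b - q₀ ≤ 2 * gKL δ b := by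
    linarith [sub_two_mul_le_bernKL hgb₀ hgb₁ hb₀ hb₁]
  have hchord : (b - q₀) * gKL δ q ≤ (q - q₀) * gKL δ b := by
    rcases hqb.eq_or_lt with rfl | hqb
    · exact le_rfl
    · have h := (convexOn_gKL hδ₀.le).secant_mono_aux1 (x := q₀)
        ⟨by linarith, by linarith⟩ hb (by linarith) hqb
      rwa [gKL_one_sub_exp_neg hδ₀, mul_zero, zero_add] at h
  have hpos : 0 < b - q₀ := by linarith
  refine le_of_mul_le_mul_left ?_ hpos
  nlinarith [mul_le_mul_of_nonneg_left hgb (sub_nonneg.2 hqb)]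

end

theorem stmt_17_general {𝒳 : Type*} {M d : ℕ}
    (x : Fin d → 𝒳)
    (fneg fpos : 𝒳 → Fin M)
    (δ Δ ybar : ℝ) (hδ0 : 0 < δ) (hδ : δ ≤ 0.2)
    (hΔ : Δ ∈ Set.Ioo (0 : ℝ) 0.1) (hybar : 1 ≤ ybar)
    (σ : Fin d → Bool)
    -- the KL-robust value V_δ under the instance P_σ, computed via g_δ
    (V : (𝒳 → Fin M) → ℝ)
    (hV : V = fun π => (1 / (d : ℝ)) * ∑ j : Fin d, ybar *
      (if π (x j) = (if σ j then fpos else fneg) (x j) then gKL δ ((1 + Δ) / 2)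
       else if π (x j) = (if σ j then fneg else fpos) (x j) then gKL δ ((1 - Δ) / 2)
       else gKL δ (1 / 4)))
    (πstar : 𝒳 → Fin M)
    (hπstar : ∀ j : Fin d, πstar (x j) = (if σ j then fpos else fneg) (x j))
    (πhat : 𝒳 → Fin M) :
    (Δ / (2 * d)) * ∑ j : Fin d,
        (if πhat (x j) ≠ (if σ j then fpos else fneg) (x j) then (1 : ℝ) else 0)
      ≤ V πstar - V πhat := by
  obtain ⟨hΔ₀, hΔ₁⟩ := hΔ
  norm_num at hδ hΔ₁
  have hgap : ∀ q, 1 / 4 ≤ q → q ≤ (1 - Δ) / 2 →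
      Δ / 2 ≤ ybar * gKL δ ((1 + Δ) / 2) - ybar * gKL δ q := by
    intro q hq hq'
    have := sub_div_two_le_gKL_sub (b := (1 + Δ) / 2) hδ0 (by linarith) (by linarith)
      (by linarith) hq (by linarith)
    nlinarith
  subst hV
  simp only [hπstar, if_true]
  rw [show Δ / (2 * d) = 1 / d * (Δ / 2) by ring, mul_assoc, ← mul_sub, ← sum_sub_distrib,
    mul_sum]
  gcongr with j
  generalize (if σ j then fpos else fneg) (x j) = opt
  generalize (if σ j then fneg else fpos) (x j) = alt
  have halt := hgap _ le_rfl (by linarith)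
  have hother := hgap _ (by linarith) le_rfl
  split_ifs <;> linarith

/-- Shattering lower bound for Bernoulli bandit instances: on the hard instance
`P_σ` built from `d` shattered points (uniform covariate, rewards
`ȳ·Bernoulli((1±Δ)/2)` at the two shattering actions and `ȳ·Bernoulli(1/4)`
otherwise), the KL-robust value of a policy equals the average of `ȳ·g_δ(·)`
at the corresponding Bernoulli parameters, and the regret of any policy `π̂`
against the optimal in-class policy `π*` (which selects `f_{σ_j}(x_j)` at each
`x_j`) is at least `(Δ/(2d))·Σⱼ 1{π̂(xⱼ) ≠ f_{σ_j}(xⱼ)}`, provided `δ ≤ 0.2`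
and `Δ ∈ (0, 0.1)`. -/
theorem stmt_17 {𝒳 : Type*} {M d : ℕ} (hd : 0 < d)
    (Pol : Set (𝒳 → Fin M)) (x : Fin d → 𝒳)
    (fneg fpos : 𝒳 → Fin M)
    -- the points x₁,…,x_d are shattered by Pol via f₋₁ = fneg and f₁ = fpos
    (hdiff : ∀ j : Fin d, fneg (x j) ≠ fpos (x j))
    (hshatter : ∀ σ : Fin d → Bool, ∃ π ∈ Pol,
      ∀ j : Fin d, π (x j) = (if σ j then fpos else fneg) (x j))
    (δ Δ ybar : ℝ) (hδ0 : 0 < δ) (hδ : δ ≤ 0.2)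
    (hΔ : Δ ∈ Set.Ioo (0 : ℝ) 0.1) (hybar : 1 ≤ ybar)
    (σ : Fin d → Bool)
    -- the KL-robust value V_δ under the instance P_σ, computed via g_δ
    (V : (𝒳 → Fin M) → ℝ)
    (hV : V = fun π => (1 / (d : ℝ)) * ∑ j : Fin d, ybar *
      (if π (x j) = (if σ j then fpos else fneg) (x j) then gKL δ ((1 + Δ) / 2)
       else if π (x j) = (if σ j then fneg else fpos) (x j) then gKL δ ((1 - Δ) / 2)
       else gKL δ (1 / 4)))
    (πstar : 𝒳 → Fin M) (hπstarPol : πstar ∈ Pol)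
    (hπstar : ∀ j : Fin d, πstar (x j) = (if σ j then fpos else fneg) (x j))
    (πhat : 𝒳 → Fin M) :
    (Δ / (2 * d)) * ∑ j : Fin d,
        (if πhat (x j) ≠ (if σ j then fpos else fneg) (x j) then (1 : ℝ) else 0)
      ≤ V πstar - V πhat :=
  stmt_17_general x fneg fpos δ Δ ybar hδ0 hδ hΔ hybar σ V hV πstar hπstar πhat
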